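/- arXiv:1002.4951 — 3 statements merged into one kernel-verified Lean document; each statement's English description precedes it below -/
import Mathlib

section
/- The deformed rational r-matrix r_ξ(λ,μ) = c₂⊗/(λ-μ) + ξ(h⊗(μX⁺) - (λX⁺)⊗h) satisfies the classical Yang-Baxter equation [r₁₂(λ,μ), r₁₃(λ,ν) + r₂₃(μ,ν)] + [r₁₃(λ,ν), r₂₃(μ,ν)] = 0 in U(sl2)⊗U(sl2)⊗U(sl2), for pairwise distinct λ, μ, ν. -/
open scoped TensorProduct

noncomputable section

variable {L : Type*} [LieRing L] [LieAlgebra ℂ L]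

/-- Given a placement `p` of pure two-fold tensors of elements of `U(sl2)` into
`U(sl2)⊗U(sl2)⊗U(sl2)`, the corresponding copy of the deformed r-matrix
`r(λ,μ) = c₂⊗/(λ-μ) + ξ(μ h⊗X⁺ - λ X⁺⊗h)`, with `c₂⊗ = h⊗h + 2X⁺⊗X⁻ + 2X⁻⊗X⁺`. -/
def rPlace {U3 : Type*} [AddCommGroup U3] [Module ℂ U3]
    (p : UniversalEnvelopingAlgebra ℂ L → UniversalEnvelopingAlgebra ℂ L → U3)
    (H E F : L) (ξ lam mu : ℂ) : U3 :=
  letI ι : L → UniversalEnvelopingAlgebra ℂ L := UniversalEnvelopingAlgebra.ι ℂ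
  (lam - mu)⁻¹ • (p (ι H) (ι H) + (2 : ℂ) • p (ι E) (ι F) + (2 : ℂ) • p (ι F) (ι E)) +
    ξ • (mu • p (ι H) (ι E) - lam • p (ι E) (ι H))

/-- Embedding of a pure tensor in the factors 1,2 of the triple tensor product. -/
def p12 (x y : UniversalEnvelopingAlgebra ℂ L) :
    UniversalEnvelopingAlgebra ℂ L ⊗[ℂ] (UniversalEnvelopingAlgebra ℂ L ⊗[ℂ]
      UniversalEnvelopingAlgebra ℂ L) := x ⊗ₜ[ℂ] (y ⊗ₜ[ℂ] 1)

/-- Embedding of a pure tensor in the factors 1,3 of the triple tensor product. -/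
def p13 (x y : UniversalEnvelopingAlgebra ℂ L) :
    UniversalEnvelopingAlgebra ℂ L ⊗[ℂ] (UniversalEnvelopingAlgebra ℂ L ⊗[ℂ]
      UniversalEnvelopingAlgebra ℂ L) := x ⊗ₜ[ℂ] ((1 : UniversalEnvelopingAlgebra ℂ L) ⊗ₜ[ℂ] y)

/-- Embedding of a pure tensor in the factors 2,3 of the triple tensor product. -/
def p23 (x y : UniversalEnvelopingAlgebra ℂ L) :
    UniversalEnvelopingAlgebra ℂ L ⊗[ℂ] (UniversalEnvelopingAlgebra ℂ L ⊗[ℂ]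
      UniversalEnvelopingAlgebra ℂ L) := (1 : UniversalEnvelopingAlgebra ℂ L) ⊗ₜ[ℂ] (x ⊗ₜ[ℂ] y)


section
attribute [local instance] LieRing.ofAssociativeRing

lemma swap_ι (a b : L) :
    (UniversalEnvelopingAlgebra.ι ℂ b) * (UniversalEnvelopingAlgebra.ι ℂ a)
      = (UniversalEnvelopingAlgebra.ι ℂ a) * (UniversalEnvelopingAlgebra.ι ℂ b)
        - (UniversalEnvelopingAlgebra.ι ℂ ⁅a, b⁆) := by
  have := LieHom.map_lie (UniversalEnvelopingAlgebra.ι ℂ (L := L)) a b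
  rw [Ring.lie_def] at this
  rw [eq_sub_iff_add_eq, this]
  abel
end

set_option maxHeartbeats 4000000 in
/-- the deformed rational r-matrix satisfies the classical Yang-Baxter equation
`[r₁₂(λ,μ), r₁₃(λ,ν) + r₂₃(μ,ν)] + [r₁₃(λ,ν), r₂₃(μ,ν)] = 0` in `U(sl2)^{⊗3}`,
for pairwise distinct spectral parameters `λ, μ, ν`. -/
theorem rDef_cybe (H E F : L)
    (hHE : ⁅H, E⁆ = (2 : ℂ) • E) (hEF : ⁅E, F⁆ = H) (hHF : ⁅H, F⁆ = (-2 : ℂ) • F)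
    (ξ lam mu nu : ℂ) (hlm : lam ≠ mu) (hln : lam ≠ nu) (hmn : mu ≠ nu) :
    letI r12 := rPlace (L := L) p12 H E F ξ lam mu
    letI r13 := rPlace (L := L) p13 H E F ξ lam nu
    letI r23 := rPlace (L := L) p23 H E F ξ mu nu
    (r12 * (r13 + r23) - (r13 + r23) * r12) + (r13 * r23 - r23 * r13) = 0 := by
  have hEA : (UniversalEnvelopingAlgebra.ι ℂ E) * (UniversalEnvelopingAlgebra.ι ℂ H)
      = (UniversalEnvelopingAlgebra.ι ℂ H) * (UniversalEnvelopingAlgebra.ι ℂ E)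
        - (2:ℂ) • (UniversalEnvelopingAlgebra.ι ℂ E) := by
    rw [swap_ι H E, hHE, map_smul]
  have hFA : (UniversalEnvelopingAlgebra.ι ℂ F) * (UniversalEnvelopingAlgebra.ι ℂ H)
      = (UniversalEnvelopingAlgebra.ι ℂ H) * (UniversalEnvelopingAlgebra.ι ℂ F)
        + (2:ℂ) • (UniversalEnvelopingAlgebra.ι ℂ F) := by
    rw [swap_ι H F, hHF, map_smul, neg_smul, sub_neg_eq_add]
  have hFE : (UniversalEnvelopingAlgebra.ι ℂ F) * (UniversalEnvelopingAlgebra.ι ℂ E)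
      = (UniversalEnvelopingAlgebra.ι ℂ E) * (UniversalEnvelopingAlgebra.ι ℂ F)
        - (UniversalEnvelopingAlgebra.ι ℂ H) := by
    rw [swap_ι E F, hEF]
  have h1 : lam - mu ≠ 0 := sub_ne_zero.mpr hlm
  have h2 : lam - nu ≠ 0 := sub_ne_zero.mpr hln
  have h3 : mu - nu ≠ 0 := sub_ne_zero.mpr hmn
  simp only [rPlace, p12, p13, p23]
  simp only [mul_add, add_mul, sub_mul, mul_sub, smul_mul_assoc, mul_smul_comm,
    Algebra.TensorProduct.tmul_mul_tmul, one_mul, mul_one]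
  simp only [hEA, hFA, hFE]
  simp only [TensorProduct.tmul_add, TensorProduct.add_tmul, TensorProduct.tmul_sub,
    TensorProduct.sub_tmul, TensorProduct.tmul_smul, ← TensorProduct.smul_tmul', smul_smul]
  match_scalars <;> field_simp <;> ring


end
end

section
/- The operators B⁽ᵏ⁾_M(μ₁,…,μ_M) = ∏_{n=k}^{M+k-1} (X⁻(μ_{n-k+1}) + nξμ_{n-k+1}) (ordered product) are symmetric functions of their arguments μ₁,…,μ_M, provided the X⁻(μ) satisfy [X⁻(λ),X⁻(μ)] = -ξ(μX⁻(λ) - λX⁻(μ)). -/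
/-- The ordered product `B⁽ᵏ⁾_M(μ₁,…,μ_M) = ∏_{n=k}^{M+k-1} (X⁻(μ_{n-k+1}) + nξμ_{n-k+1})`. -/
noncomputable def Bop {A : Type*} [Ring A] [Algebra ℂ A] (Xm : ℂ → A) (ξ : ℂ) :
    ℕ → List ℂ → A
  | _, [] => 1
  | k, μ :: rest => (Xm μ + ((k : ℂ) * ξ * μ) • (1 : A)) * Bop Xm ξ (k + 1) rest

lemma Bop_swap_key {A : Type*} [Ring A] [Algebra ℂ A] (Xm : ℂ → A) (ξ : ℂ)
    (hXm : ∀ l m : ℂ, Xm l * Xm m - Xm m * Xm l = -(ξ • (m • Xm l - l • Xm m)))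
    (k : ℕ) (x y : ℂ) :
    (Xm y + ((k : ℂ) * ξ * y) • (1 : A)) * (Xm x + (((k : ℕ) + 1 : ℂ) * ξ * x) • (1 : A)) =
    (Xm x + ((k : ℂ) * ξ * x) • (1 : A)) * (Xm y + (((k : ℕ) + 1 : ℂ) * ξ * y) • (1 : A)) := by
  have h : Xm y * Xm x = Xm x * Xm y - ξ • (x • Xm y - y • Xm x) := by
    have h0 := hXm y x
    rw [sub_eq_iff_eq_add] at h0
    rw [h0]; abel
  simp only [mul_add, add_mul, smul_mul_assoc, mul_smul_comm, one_mul, mul_one, smul_smul, h]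
  match_scalars <;> ring

/-- if `[X⁻(λ),X⁻(μ)] = -ξ(μX⁻(λ) - λX⁻(μ))` then the operators
`B⁽ᵏ⁾_M` are symmetric functions of their arguments. -/
theorem Bop_symmetric {A : Type*} [Ring A] [Algebra ℂ A] (Xm : ℂ → A) (ξ : ℂ)
    (hXm : ∀ l m : ℂ, Xm l * Xm m - Xm m * Xm l = -(ξ • (m • Xm l - l • Xm m)))
    (k : ℕ) (l₁ l₂ : List ℂ) (hperm : l₁.Perm l₂) :
    Bop Xm ξ k l₁ = Bop Xm ξ k l₂ := by
  induction hperm generalizing k with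
  | nil => rfl
  | cons x _ ih => simp only [Bop, ih]
  | swap x y l =>
      simp only [Bop, ← mul_assoc]
      push_cast
      rw [Bop_swap_key Xm ξ hXm k x y]
  | trans _ _ ih1 ih2 => rw [ih1, ih2]
end

section
/- The operators B⁽ᵏ⁾_M satisfy the identity B⁽ᵏ⁾_M(μ̄) = B⁽ᵏ⁻¹⁾_M(μ̄) + ξ Σ_{i=1}^{M} μ_i B⁽ᵏ⁾_{M-1}(μ̄⁽ⁱ⁾), where μ̄ = {μ₁,…,μ_M} and μ̄⁽ⁱ⁾ = μ̄ \ {μ_i}. -/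
/-- `B⁽ᵏ⁾_M(μ̄) = B⁽ᵏ⁻¹⁾_M(μ̄) + ξ Σᵢ μᵢ B⁽ᵏ⁾_{M-1}(μ̄⁽ⁱ⁾)` (stated with `k+1` in
place of `k ≥ 1`). -/
theorem Bop_shift {A : Type*} [Ring A] [Algebra ℂ A] (Xm : ℂ → A) (ξ : ℂ)
    (hXm : ∀ l m : ℂ, Xm l * Xm m - Xm m * Xm l = -(ξ • (m • Xm l - l • Xm m)))
    (k : ℕ) (μs : List ℂ) :
    Bop Xm ξ (k + 1) μs =
      Bop Xm ξ k μs +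
        ∑ i : Fin μs.length, (ξ * μs.get i) • Bop Xm ξ (k + 1) (μs.eraseIdx i) := by
  induction μs generalizing k with
  | nil => simp [Bop]
  | cons μ rest ih =>
    have h := ih (k + 1)
    simp only [Bop, List.length_cons, Fin.sum_univ_succ, List.get_eq_getElem,
      Fin.getElem_fin, Fin.val_zero, List.getElem_cons_zero, List.eraseIdx_cons_zero,
      Fin.val_succ, List.getElem_cons_succ, List.eraseIdx_cons_succ]
    push_cast
    rw [h, mul_add]
    set P : A := Xm μ + (((k : ℂ) + 1) * ξ * μ) • (1 : A) with hP
    have h1 : P * Bop Xm ξ (k + 1) rest =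
        (Xm μ + ((k : ℂ) * ξ * μ) • (1 : A)) * Bop Xm ξ (k + 1) rest +
          (ξ * μ) • Bop Xm ξ (k + 1) rest := by
      have hc : ((k : ℂ) + 1) * ξ * μ = (k : ℂ) * ξ * μ + ξ * μ := by ring
      rw [hP, hc, add_smul, ← add_assoc, add_mul, smul_one_mul]
    have h2 : P * ∑ i : Fin rest.length,
          (ξ * rest.get i) • Bop Xm ξ (k + 1 + 1) (rest.eraseIdx i) =
        ∑ i : Fin rest.length,
          (ξ * rest.get i) • (P * Bop Xm ξ (k + 1 + 1) (rest.eraseIdx i)) := by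
      rw [Finset.mul_sum]
      exact Finset.sum_congr rfl fun i _ => mul_smul_comm _ _ _
    rw [h1, h2]
    simp only [List.get_eq_getElem, Fin.getElem_fin]
    abel
end
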